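/- arXiv:2512.21128 — 4 statements merged into one kernel-verified Lean document; each statement's English description precedes it below -/
import Mathlib

section
/- Let k ≥ 1 and let G be a finite connected simple graph on a vertex set V with |V| ≥ k+1. Then G is k-vertex-connected, i.e., for every X ⊆ V with |X| ≤ k−1 the induced subgraph G[V∖X] is connected, if and only if for every connected cut S of G one has |Γ(S)| ≥ min{k, |V∖S|}, where Γ(S) is the set of vertices in V∖S that are adjacent in G to some vertex of S. -/
/-!
If deleting fewer than `k` vertices never disconnects `G`, a connected cut `S` with
`|Γ(S)| < min {k, |V ∖ S|}` is impossible: deleting `Γ(S)` would separate `S` from the vertices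
of `V ∖ S` outside `Γ(S)`.

Conversely, suppose `G - X` is disconnected with `|X| < k`. Let `C` be a component of `G - X` and
`D` the component of `G - C` through a vertex of `V ∖ X` outside `C`. Since `G` is connected,
every component of `G - C` is attached to `C`, so `S = V ∖ D` is a connected cut. Every vertex of
`Γ(S)` is a neighbour of `C` outside `C`, hence lies in `X`, and `D ⊄ X`, so
`|Γ(S)| < min {k, |D|}`.
-/

open Finset

variable {V : Type*} [Fintype V] [DecidableEq V]

/-- `Crosses S e`: exactly one endpoint of the edge/link `e` lies in `S`. -/
def Crosses (S : Finset V) (e : Sym2 V) : Prop :=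
  ∃ x y : V, e = s(x, y) ∧ x ∈ S ∧ y ∉ S

instance (S : Finset V) : DecidablePred (Crosses S) := fun e =>
  decidable_of_iff (∃ x y : V, e = s(x, y) ∧ x ∈ S ∧ y ∉ S) Iff.rfl

/-- The cut `δ(S)`: edges of `G` with exactly one endpoint in `S`. -/
def cutEdges (G : SimpleGraph V) [DecidableRel G.Adj] (S : Finset V) :
    Finset (Sym2 V) :=
  G.edgeFinset.filter fun e => Crosses S e

/-- `G` is `k`-edge-connected: every nonempty proper cut has at least `k` crossing edges. -/
def EdgeConnected (G : SimpleGraph V) [DecidableRel G.Adj] (k : ℕ) : Prop :=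
  ∀ S : Finset V, S.Nonempty → S ≠ Finset.univ → k ≤ (cutEdges G S).card

/-- `S` is a `k`-cut: a nonempty proper vertex set with exactly `k` crossing edges. -/
def IsCut (G : SimpleGraph V) [DecidableRel G.Adj] (k : ℕ) (S : Finset V) : Prop :=
  S.Nonempty ∧ S ≠ Finset.univ ∧ (cutEdges G S).card = k

/-- `(S₁, S₂)` are snug shores for `v` (with respect to the root `r`):
two `k`-cuts avoiding `r` with `v ∉ S₁` and `S₂ = S₁ ∪ {v}`. -/
def SnugShores (G : SimpleGraph V) [DecidableRel G.Adj] (k : ℕ) (r v : V)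
    (S₁ S₂ : Finset V) : Prop :=
  IsCut G k S₁ ∧ IsCut G k S₂ ∧ r ∉ S₁ ∧ r ∉ S₂ ∧ v ∉ S₁ ∧ S₂ = insert v S₁

/-- `v` is a snug vertex (with respect to the root `r`). -/
def Snug (G : SimpleGraph V) [DecidableRel G.Adj] (k : ℕ) (r v : V) : Prop :=
  v ≠ r ∧ k + 1 ≤ G.degree v ∧ ∃ S₁ S₂ : Finset V, SnugShores G k r v S₁ S₂

/-- A snug chain: snug vertices `u 0, …, u t` together with `k`-cuts
`S 0, …, S (t+1)` such that `(S i, S (i+1))` are snug shores for `u i`. -/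
def IsSnugChain (G : SimpleGraph V) [DecidableRel G.Adj] (k : ℕ) (r : V)
    (t : ℕ) (u : ℕ → V) (S : ℕ → Finset V) : Prop :=
  ∀ i ≤ t, Snug G k r (u i) ∧ SnugShores G k r (u i) (S i) (S (i + 1))

namespace SimpleGraph

section Induce

variable {α : Type*} {G : SimpleGraph α}

theorem exists_adj_of_induce_preconnected {s t : Set α} (hs : (G.induce s).Preconnected)
    {a b : α} (ha : a ∈ s) (hb : b ∈ s) (hat : a ∈ t) (hbt : b ∉ t) :
    ∃ u ∈ t, ∃ w ∈ s, w ∉ t ∧ G.Adj u w := by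
  obtain ⟨p⟩ := hs ⟨a, ha⟩ ⟨b, hb⟩
  obtain ⟨d, -, hu, hw⟩ := p.exists_boundary_dart {x | x.1 ∈ t} hat hbt
  exact ⟨d.fst, hu, d.snd, d.snd.2, hw, d.adj⟩

theorem exists_induce_connected_closed {s : Set α} {v : α} (hv : v ∈ s) :
    ∃ c ⊆ s, v ∈ c ∧ (G.induce c).Connected ∧ ∀ u ∈ c, ∀ w ∈ s, G.Adj u w → w ∈ c := by
  set C := (G.induce s).connectedComponentMk ⟨v, hv⟩
  let f : C.toSimpleGraph ↪g G := (Embedding.induce C.supp).trans (Embedding.induce s)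
  refine ⟨Set.range f, ?_, ⟨⟨⟨v, hv⟩, rfl⟩, rfl⟩,
    f.isoInduceRange.connected_iff.1 C.connected_toSimpleGraph, ?_⟩
  · rintro _ ⟨y, rfl⟩
    exact y.1.2
  · rintro _ ⟨y, rfl⟩ w hw huw
    exact ⟨⟨⟨w, hw⟩, C.mem_supp_of_adj_mem_supp y.2 huw⟩, rfl⟩

theorem induce_compl_connected_of_closed (hG : G.Connected) {c d : Set α}
    (hc : (G.induce c).Connected) (hdc : d ⊆ cᶜ)
    (hd : ∀ u ∈ d, ∀ w ∈ cᶜ, G.Adj u w → w ∈ d) : (G.induce dᶜ).Connected := by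
  have hcd : c ⊆ dᶜ := fun x hxc hxd => hdc hxd hxc
  obtain ⟨⟨x, hxc⟩⟩ := hc.nonempty
  apply G.induce_connected_of_patches x (hcd hxc)
  intro v hv
  by_cases hvc : v ∈ c
  · exact ⟨c, hcd, hxc, hvc, hc.preconnected _ _⟩
  obtain ⟨e, hec, hve, he, heclosed⟩ := exists_induce_connected_closed (G := G) (s := cᶜ) hvc
  have hed : e ⊆ dᶜ := by
    intro w hwe hwd
    obtain ⟨u, hud, w', hw'e, hw'd, huw'⟩ :=
      exists_adj_of_induce_preconnected he.preconnected hwe hve hwd hv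
    exact hw'd (hd u hud w' (hec hw'e) huw')
  obtain ⟨p⟩ := hG.preconnected v x
  obtain ⟨dt, -, hue, hwe⟩ := p.exists_boundary_dart e hve fun hxe => hec hxe hxc
  have hwc : dt.snd ∈ c := by
    by_contra hwc
    exact hwe (heclosed _ hue _ hwc dt.adj)
  exact ⟨e ∪ c, Set.union_subset hed hcd, Or.inr hxc, Or.inl hve,
    (connected_induce_union he.preconnected hc.preconnected hue hwc dt.adj).preconnected _ _⟩

theorem exists_connected_cut_of_not_preconnected (hG : G.Connected) {s : Set α}
    (hs : ¬ (G.induce s).Preconnected) :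
    ∃ d : Set α, (G.induce d).Connected ∧ (G.induce dᶜ).Connected ∧ (d ∩ s).Nonempty ∧
      ∀ w ∈ d, ∀ u ∉ d, G.Adj u w → w ∉ s := by
  obtain ⟨⟨a, ha⟩, ⟨b, hb⟩, hab⟩ : ∃ x y, ¬ (G.induce s).Reachable x y := by
    simpa [Preconnected] using hs
  obtain ⟨c, hcs, hac, hc, hcclosed⟩ := exists_induce_connected_closed (G := G) ha
  have hbc : b ∉ c := fun hbc =>
    hab ((hc.preconnected ⟨a, hac⟩ ⟨b, hbc⟩).map (induceHomOfLE G hcs).toHom)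
  obtain ⟨d, hdc, hbd, hd, hdclosed⟩ := exists_induce_connected_closed (G := G) (s := cᶜ) hbc
  refine ⟨d, hd, induce_compl_connected_of_closed hG hc hdc hdclosed, ⟨b, hbd, hb⟩, ?_⟩
  intro w hwd u hud huw hws
  have huc : u ∈ c := by
    by_contra huc
    exact hud (hdclosed w hwd u huc huw.symm)
  exact hdc hwd (hcclosed u huc w hws huw)

end Induce

def vertexBoundary (G : SimpleGraph V) [DecidableRel G.Adj] (S : Finset V) : Finset V :=
  Sᶜ.filter fun v => ∃ u ∈ S, G.Adj u v

variable {G : SimpleGraph V} [DecidableRel G.Adj]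

theorem mem_vertexBoundary {S : Finset V} {v : V} :
    v ∈ G.vertexBoundary S ↔ v ∉ S ∧ ∃ u ∈ S, G.Adj u v := by
  simp [vertexBoundary]

theorem compl_subset_vertexBoundary_of_preconnected {S : Finset V} (hS : S.Nonempty)
    (h : (G.induce ((G.vertexBoundary S)ᶜ : Finset V)).Preconnected) :
    Sᶜ ⊆ G.vertexBoundary S := by
  obtain ⟨a, haS⟩ := hS
  intro b hb
  by_contra hbΓ
  have haΓ : a ∉ G.vertexBoundary S := fun ha => (mem_vertexBoundary.1 ha).1 haS
  obtain ⟨u, hu, w, hwΓ, hwS, huw⟩ := exists_adj_of_induce_preconnected h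
    (by simpa using haΓ) (by simpa using hbΓ) (t := S) haS (by simpa using hb)
  exact (by simpa using hwΓ : w ∉ G.vertexBoundary S) (mem_vertexBoundary.2 ⟨hwS, u, hu, huw⟩)

theorem exists_connected_cut_vertexBoundary_subset (hG : G.Connected) {X : Finset V}
    (hX : ¬ (G.induce (Xᶜ : Finset V)).Preconnected) :
    ∃ S : Finset V, S.Nonempty ∧ S ≠ univ ∧ (G.induce S).Connected ∧
      (G.induce (Sᶜ : Finset V)).Connected ∧
      G.vertexBoundary S ⊆ X ∧ G.vertexBoundary S ⊂ Sᶜ := by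
  obtain ⟨d, hd, hdcompl, ⟨b, hbd, hbX⟩, hbdry⟩ := exists_connected_cut_of_not_preconnected hG hX
  obtain ⟨S, rfl⟩ : ∃ S : Finset V, ((Sᶜ : Finset V) : Set V) = d :=
    ⟨(Set.toFinite dᶜ).toFinset, by simp⟩
  rw [coe_compl, compl_compl] at hdcompl
  simp only [coe_compl, Set.mem_compl_iff, mem_coe, not_not] at hbd hbX hbdry
  have hΓX : G.vertexBoundary S ⊆ X := fun w hw =>
    have ⟨hwS, u, huS, huw⟩ := mem_vertexBoundary.1 hw
    hbdry w hwS u huS huw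
  refine ⟨S, coe_nonempty.1 (Set.nonempty_coe_sort.1 hdcompl.nonempty),
    fun h => hbd (h ▸ mem_univ b), hdcompl, hd, hΓX, ?_⟩
  exact (ssubset_iff_of_subset (filter_subset _ _)).2
    ⟨b, mem_compl.2 hbd, fun hbΓ => hbX (hΓX hbΓ)⟩

end SimpleGraph

open SimpleGraph

theorem vertexConnected_iff_connectedCuts_general
    (k : ℕ) (G : SimpleGraph V) [DecidableRel G.Adj]
    (hG : G.Connected) (hcard : k + 1 ≤ Fintype.card V) :
    (∀ X : Finset V, X.card ≤ k - 1 → (G.induce ((Xᶜ : Finset V) : Set V)).Connected) ↔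
      ∀ S : Finset V, S.Nonempty → S ≠ Finset.univ →
        (G.induce (S : Set V)).Connected →
        (G.induce ((Sᶜ : Finset V) : Set V)).Connected →
        min k (Sᶜ : Finset V).card ≤
          ((Sᶜ : Finset V).filter (fun v => ∃ u ∈ S, G.Adj u v)).card := by
  change _ ↔ ∀ S : Finset V, _ → _ → _ → _ → min k _ ≤ (G.vertexBoundary S).card
  constructor
  · intro hconn S hS _ _ _
    by_contra! hlt
    rw [lt_min_iff] at hlt
    have hsub := compl_subset_vertexBoundary_of_preconnected hS
      (hconn _ (by omega)).preconnected
    exact (card_le_card hsub).not_gt hlt.2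
  · intro hcuts X hX
    rcases X.eq_empty_or_nonempty with rfl | hXne
    · rw [coe_compl, coe_empty, Set.compl_empty]
      exact (induceUnivIso G).connected_iff.2 hG
    refine (connected_iff _).2 ⟨?_, ?_⟩
    · by_contra hdisc
      obtain ⟨S, hS, hSu, hSc, hScc, hΓX, hΓS⟩ :=
        exists_connected_cut_vertexBoundary_subset hG hdisc
      have := hcuts S hS hSu hSc hScc
      have := card_le_card hΓX
      have := card_lt_card hΓS
      have := hXne.card_pos
      omega
    · rw [Set.nonempty_coe_sort, coe_nonempty, ← card_pos, card_compl]
      omega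

/-- A connected graph on at least `k+1` vertices is `k`-vertex-connected iff
every connected cut `S` satisfies `|Γ(S)| ≥ min {k, |V ∖ S|}`. -/
theorem vertexConnected_iff_connectedCuts
    (k : ℕ) (hk : 1 ≤ k) (G : SimpleGraph V) [DecidableRel G.Adj]
    (hG : G.Connected) (hcard : k + 1 ≤ Fintype.card V) :
    (∀ X : Finset V, X.card ≤ k - 1 → (G.induce ((Xᶜ : Finset V) : Set V)).Connected) ↔
      ∀ S : Finset V, S.Nonempty → S ≠ Finset.univ →
        (G.induce (S : Set V)).Connected →
        (G.induce ((Sᶜ : Finset V) : Set V)).Connected →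
        min k (Sᶜ : Finset V).card ≤
          ((Sᶜ : Finset V).filter (fun v => ∃ u ∈ S, G.Adj u v)).card :=
  vertexConnected_iff_connectedCuts_general k G hG hcard
end

section
/- Let k ≥ 1, let G be a k-edge-connected finite simple graph on V, fix a root r ∈ V, let u be a snug vertex with snug shores (S₁, S₂), and let S ⊆ V∖{r} be a nonempty k-cut. Then S ⊆ S₁, or S₂ ⊆ S, or S₂ ∩ S = ∅. -/
open Finset

variable {V : Type*} [Fintype V] [DecidableEq V]

/-
Write `d X` for the number of edges leaving `X`; it is submodular and posimodular. Suppose a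
`k`-cut `S ∌ r` crosses the shores `S₁ ⊂ S₂ = S₁ ∪ {u}`. Every nonempty set avoiding `r` has
`d ≥ k`, so posimodularity applied to two `k`-cuts bounds `d` of one of their differences by `k`.
If `u ∈ S`, the set `A = S \ S₁` has `d A ≤ k` and meets `S₂` exactly in `u`; if `u ∉ S`, the set
`A = S₂ \ S` has `d A ≤ k` and `A \ S₁ = {u}`. Uncrossing `A` with `S₂`, resp. `S₁`, then yields
`d {u} ≤ k`, contradicting `deg u ≥ k + 1`.
-/

lemma crosses_mk_iff {α : Type*} (S : Finset α) (x y : α) :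
    Crosses S s(x, y) ↔ (x ∈ S ∧ y ∉ S) ∨ (y ∈ S ∧ x ∉ S) := by
  constructor
  · rintro ⟨a, b, hab, ha, hb⟩
    rcases Sym2.eq_iff.mp hab with ⟨rfl, rfl⟩ | ⟨rfl, rfl⟩
    · exact Or.inl ⟨ha, hb⟩
    · exact Or.inr ⟨ha, hb⟩
  · rintro (⟨hx, hy⟩ | ⟨hy, hx⟩)
    · exact ⟨x, y, rfl, hx, hy⟩
    · exact ⟨y, x, Sym2.eq_swap, hy, hx⟩

section Uncrossing

variable (G : SimpleGraph V) [DecidableRel G.Adj]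

lemma card_cutEdges_eq_sum (X : Finset V) :
    #(cutEdges G X) = ∑ e ∈ G.edgeFinset, if Crosses X e then 1 else 0 :=
  card_filter _ _

lemma card_cutEdges_inter_add_card_cutEdges_union_le (X Y : Finset V) :
    #(cutEdges G (X ∩ Y)) + #(cutEdges G (X ∪ Y)) ≤ #(cutEdges G X) + #(cutEdges G Y) := by
  simp only [card_cutEdges_eq_sum, ← sum_add_distrib]
  refine sum_le_sum fun e _ => ?_
  induction e using Sym2.ind with
  | _ x y =>
    simp only [crosses_mk_iff, mem_inter, mem_union]
    by_cases x ∈ X <;> by_cases x ∈ Y <;> by_cases y ∈ X <;> by_cases y ∈ Y <;> simp [*]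

lemma card_cutEdges_sdiff_add_card_cutEdges_sdiff_le (X Y : Finset V) :
    #(cutEdges G (X \ Y)) + #(cutEdges G (Y \ X)) ≤ #(cutEdges G X) + #(cutEdges G Y) := by
  simp only [card_cutEdges_eq_sum, ← sum_add_distrib]
  refine sum_le_sum fun e _ => ?_
  induction e using Sym2.ind with
  | _ x y =>
    simp only [crosses_mk_iff, mem_sdiff]
    by_cases x ∈ X <;> by_cases x ∈ Y <;> by_cases y ∈ X <;> by_cases y ∈ Y <;> simp [*]

lemma card_cutEdges_singleton (u : V) : #(cutEdges G {u}) = G.degree u := by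
  rw [← SimpleGraph.card_incidenceFinset_eq_degree]
  congr 1
  ext e
  induction e using Sym2.ind with
  | _ x y =>
    simp only [cutEdges, mem_filter, SimpleGraph.mem_incidenceFinset,
      SimpleGraph.mk'_mem_incidenceSet_iff, crosses_mk_iff, mem_singleton,
      SimpleGraph.mem_edgeFinset, SimpleGraph.mem_edgeSet]
    constructor
    · rintro ⟨hxy, (⟨rfl, -⟩ | ⟨rfl, -⟩)⟩
      · exact ⟨hxy, Or.inl rfl⟩
      · exact ⟨hxy, Or.inr rfl⟩
    · rintro ⟨hxy, (rfl | rfl)⟩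
      · exact ⟨hxy, Or.inl ⟨rfl, fun h => hxy.ne h.symm⟩⟩
      · exact ⟨hxy, Or.inr ⟨rfl, hxy.ne⟩⟩

variable {G} {k : ℕ} {r : V}

lemma EdgeConnected.le_card_cutEdges (hG : EdgeConnected G k) {X : Finset V}
    (hX : X.Nonempty) (hrX : r ∉ X) : k ≤ #(cutEdges G X) :=
  hG X hX fun h => hrX (h ▸ mem_univ r)

lemma EdgeConnected.card_cutEdges_sdiff_le (hG : EdgeConnected G k) {X Y : Finset V}
    (hX : #(cutEdges G X) = k) (hY : #(cutEdges G Y) = k) (hYX : (Y \ X).Nonempty)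
    (hrY : r ∉ Y) : #(cutEdges G (X \ Y)) ≤ k := by
  have := card_cutEdges_sdiff_add_card_cutEdges_sdiff_le G X Y
  have := hG.le_card_cutEdges hYX fun h => hrY (mem_sdiff.mp h).1
  omega

lemma EdgeConnected.degree_le_of_inter_eq_singleton (hG : EdgeConnected G k)
    {A B : Finset V} {u : V} (hA : #(cutEdges G A) ≤ k) (hB : #(cutEdges G B) = k)
    (hAB : A ∩ B = {u}) (hrA : r ∉ A) (hrB : r ∉ B) : G.degree u ≤ k := by
  have hsub := card_cutEdges_inter_add_card_cutEdges_union_le G A B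
  have hu : u ∈ A ∪ B := mem_union_left _ (mem_of_mem_inter_left (hAB ▸ mem_singleton_self u))
  have := hG.le_card_cutEdges ⟨u, hu⟩ fun h => (mem_union.mp h).elim hrA hrB
  rw [hAB, card_cutEdges_singleton] at hsub
  omega

lemma EdgeConnected.degree_le_of_sdiff_eq_singleton (hG : EdgeConnected G k)
    {A B : Finset V} {u : V} (hA : #(cutEdges G A) ≤ k) (hB : #(cutEdges G B) = k)
    (hAB : A \ B = {u}) (hBA : (B \ A).Nonempty) (hrB : r ∉ B) : G.degree u ≤ k := by
  have hposi := card_cutEdges_sdiff_add_card_cutEdges_sdiff_le G A B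
  have := hG.le_card_cutEdges hBA fun h => hrB (mem_sdiff.mp h).1
  rw [hAB, card_cutEdges_singleton] at hposi
  omega

end Uncrossing

theorem kcut_interaction_with_snugShores_general
    (k : ℕ) (G : SimpleGraph V) [DecidableRel G.Adj]
    (hG : EdgeConnected G k) (r u : V) (hu : Snug G k r u)
    (S₁ S₂ : Finset V) (hshores : SnugShores G k r u S₁ S₂)
    (S : Finset V) (hS : IsCut G k S) (hrS : r ∉ S) :
    S ⊆ S₁ ∨ S₂ ⊆ S ∨ S₂ ∩ S = ∅ := by
  obtain ⟨⟨-, -, hS₁⟩, ⟨-, -, hS₂⟩, hrS₁, hrS₂, huS₁, rfl⟩ := hshores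
  have hdeg : ¬G.degree u ≤ k := by have := hu.2.1; omega
  by_cases huS : u ∈ S
  · refine Or.inr (Or.inl fun x hx => by_contra fun hxS => hdeg ?_)
    have hx₁ : x ∈ S₁ \ S := by aesop
    have hA : #(cutEdges G (S \ S₁)) ≤ k := hG.card_cutEdges_sdiff_le hS.2.2 hS₁ ⟨x, hx₁⟩ hrS₁
    have hAB : (S \ S₁) ∩ insert u S₁ = {u} := by ext y; by_cases y = u <;> aesop
    exact hG.degree_le_of_inter_eq_singleton hA hS₂ hAB (fun h => hrS (mem_sdiff.mp h).1) hrS₂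
  · refine or_iff_not_imp_right.mpr fun hmeet => by_contra fun hS₁S => hdeg ?_
    obtain ⟨x, hxS, hx₁⟩ := not_subset.mp hS₁S
    obtain ⟨y, hy⟩ := nonempty_iff_ne_empty.mpr (not_or.mp hmeet).2
    have hA : #(cutEdges G (insert u S₁ \ S)) ≤ k :=
      hG.card_cutEdges_sdiff_le hS₂ hS.2.2 ⟨x, by aesop⟩ hrS
    have hAB : (insert u S₁ \ S) \ S₁ = {u} := by ext z; by_cases z = u <;> aesop
    exact hG.degree_le_of_sdiff_eq_singleton hA hS₁ hAB ⟨y, by aesop⟩ hrS₁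

/-- No `k`-cut avoiding the root can cross snug shores: if `(S₁, S₂)` are snug
shores for `u` and `S ⊆ V∖{r}` is a `k`-cut, then `S ⊆ S₁`, or `S₂ ⊆ S`,
or `S₂ ∩ S = ∅`. -/
theorem kcut_interaction_with_snugShores
    (k : ℕ) (hk : 1 ≤ k) (G : SimpleGraph V) [DecidableRel G.Adj]
    (hG : EdgeConnected G k) (r u : V) (hu : Snug G k r u)
    (S₁ S₂ : Finset V) (hshores : SnugShores G k r u S₁ S₂)
    (S : Finset V) (hS : IsCut G k S) (hrS : r ∉ S) :
    S ⊆ S₁ ∨ S₂ ⊆ S ∨ S₂ ∩ S = ∅ :=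
  kcut_interaction_with_snugShores_general k G hG r u hu S₁ S₂ hshores S hS hrS
end

section
/- Let k ≥ 1, let G be a k-edge-connected finite simple graph on V, fix a root r ∈ V, and let S ⊆ V∖{r} be a k-cut. If v and v′ are snug vertices with v, v′ ∉ S such that (S, S ∪ {v}) are snug shores for v and (S, S ∪ {v′}) are snug shores for v′, then v = v′. In other words, for every k-cut S ⊆ V∖{r} there is at most one vertex v ∈ V∖S such that (S, S ∪ {v}) form snug shores for v. -/
open Finset

variable {V : Type*} [Fintype V] [DecidableEq V]

/- The edges of `δ(S)` at a vertex `v ∉ S` are the edges from `v` into `S`, and those of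
`δ(S ∪ {v})` at `v` are the edges from `v` out of `S`; every other edge crosses `S` and
`S ∪ {v}` alike. Hence if both are `k`-cuts, `v` has as many neighbours in `S` as outside,
and a snug `v` has more than `k / 2` neighbours in `S`. Two distinct such vertices would
contribute more than `k` edges to `δ(S)`. -/

section Cut

variable (G : SimpleGraph V) [DecidableRel G.Adj]

theorem mk_mem_cutEdges_iff {S : Finset V} {a b : V} :
    s(a, b) ∈ cutEdges G S ↔ G.Adj a b ∧ (a ∈ S ↔ b ∉ S) := by
  simp only [cutEdges, mem_filter, SimpleGraph.mem_edgeFinset, SimpleGraph.mem_edgeSet]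
  refine and_congr_right fun _ => ⟨?_, fun h => ?_⟩
  · rintro ⟨x, y, h, hx, hy⟩
    rcases Sym2.eq_iff.mp h with ⟨rfl, rfl⟩ | ⟨rfl, rfl⟩ <;> tauto
  · by_cases ha : a ∈ S
    · exact ⟨a, b, rfl, ha, h.mp ha⟩
    · exact ⟨b, a, Sym2.eq_swap, not_not.mp (mt h.mpr ha), ha⟩

theorem cutEdges_compl (S : Finset V) : cutEdges G Sᶜ = cutEdges G S := by
  ext e
  induction e using Sym2.ind
  simp only [mk_mem_cutEdges_iff, mem_compl]
  tauto

theorem cutEdges_filter_mem_eq_map {S : Finset V} {v : V} (hv : v ∉ S) :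
    (cutEdges G S).filter (v ∈ ·) = (G.neighborFinset v ∩ S).map (Sym2.mkEmbedding v) := by
  ext e
  induction e using Sym2.ind with
  | _ a b =>
    simp only [mem_filter, mk_mem_cutEdges_iff, Sym2.mem_iff, mem_map, mem_inter,
      SimpleGraph.mem_neighborFinset, Sym2.mkEmbedding_apply]
    constructor
    · rintro ⟨⟨hab, hS⟩, rfl | rfl⟩
      · exact ⟨b, ⟨hab, by tauto⟩, rfl⟩
      · exact ⟨a, ⟨hab.symm, by tauto⟩, Sym2.eq_swap⟩
    · rintro ⟨w, ⟨hvw, hw⟩, he⟩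
      rcases Sym2.eq_iff.mp he with ⟨rfl, rfl⟩ | ⟨rfl, rfl⟩
      · exact ⟨⟨hvw, by tauto⟩, Or.inl rfl⟩
      · exact ⟨⟨hvw.symm, by tauto⟩, Or.inr rfl⟩

theorem cutEdges_insert_filter_mem_eq_map (S : Finset V) (v : V) :
    (cutEdges G (insert v S)).filter (v ∈ ·) =
      (G.neighborFinset v \ S).map (Sym2.mkEmbedding v) := by
  have hv : v ∉ (insert v S)ᶜ := by simp
  rw [← cutEdges_compl, cutEdges_filter_mem_eq_map G hv]
  congr 1
  ext w
  simp only [mem_inter, mem_sdiff, mem_compl, mem_insert, not_or,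
    SimpleGraph.mem_neighborFinset]
  exact ⟨fun h => ⟨h.1, h.2.2⟩, fun h => ⟨h.1, G.ne_of_adj h.1 |>.symm, h.2⟩⟩

theorem cutEdges_insert_filter_notMem (S : Finset V) (v : V) :
    (cutEdges G (insert v S)).filter (v ∉ ·) = (cutEdges G S).filter (v ∉ ·) := by
  ext e
  induction e using Sym2.ind with
  | _ a b =>
    simp only [mem_filter, mk_mem_cutEdges_iff, Sym2.mem_iff, mem_insert, not_or]
    constructor <;> rintro ⟨⟨hab, hS⟩, hva, hvb⟩ <;>
      exact ⟨⟨hab, by simpa [Ne.symm hva, Ne.symm hvb] using hS⟩, hva, hvb⟩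

theorem card_cutEdges_insert_add {S : Finset V} {v : V} (hv : v ∉ S) :
    #(cutEdges G (insert v S)) + #(G.neighborFinset v ∩ S) =
      #(cutEdges G S) + #(G.neighborFinset v \ S) := by
  have hS := card_filter_add_card_filter_not (s := cutEdges G S) (v ∈ ·)
  have hvS := card_filter_add_card_filter_not (s := cutEdges G (insert v S)) (v ∈ ·)
  rw [cutEdges_filter_mem_eq_map G hv, card_map] at hS
  rw [cutEdges_insert_filter_mem_eq_map, card_map, cutEdges_insert_filter_notMem] at hvS
  omega

theorem degree_eq_two_mul_card_neighborFinset_inter {S : Finset V} {v : V} (hv : v ∉ S)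
    (hcard : #(cutEdges G (insert v S)) = #(cutEdges G S)) :
    G.degree v = 2 * #(G.neighborFinset v ∩ S) := by
  have := card_cutEdges_insert_add G hv
  have := card_inter_add_card_sdiff (G.neighborFinset v) S
  rw [G.card_neighborFinset_eq_degree] at this
  omega

theorem card_neighborFinset_inter_add_le {S : Finset V} {v v' : V} (hvv' : v ≠ v')
    (hv : v ∉ S) (hv' : v' ∉ S) :
    #(G.neighborFinset v ∩ S) + #(G.neighborFinset v' ∩ S) ≤ #(cutEdges G S) := by
  rw [← card_map (Sym2.mkEmbedding v), ← card_map (Sym2.mkEmbedding v'),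
    ← card_union_of_disjoint]
  · rw [← cutEdges_filter_mem_eq_map G hv, ← cutEdges_filter_mem_eq_map G hv']
    exact card_le_card (union_subset (filter_subset _ _) (filter_subset _ _))
  · rw [← cutEdges_filter_mem_eq_map G hv, ← cutEdges_filter_mem_eq_map G hv']
    refine disjoint_filter.mpr fun e he hve hv'e => ?_
    obtain ⟨a, b, rfl, ha, hb⟩ := (mem_filter.mp he).2
    rw [Sym2.mem_iff] at hve hv'e
    rcases hve with rfl | rfl <;> rcases hv'e with rfl | rfl <;> tauto

end Cut

theorem at_most_one_outgoing_general
    (k : ℕ) (G : SimpleGraph V) [DecidableRel G.Adj]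
    (r : V)
    (S : Finset V)
    (v v' : V) (hv : Snug G k r v) (hv' : Snug G k r v')
    (h₁ : SnugShores G k r v S (insert v S))
    (h₂ : SnugShores G k r v' S (insert v' S)) :
    v = v' := by
  by_contra hvv'
  have hcut : #(cutEdges G S) = k := h₁.1.2.2
  have hvS : v ∉ S := h₁.2.2.2.2.1
  have hv'S : v' ∉ S := h₂.2.2.2.2.1
  have hdeg := degree_eq_two_mul_card_neighborFinset_inter G hvS (h₁.2.1.2.2.trans hcut.symm)
  have hdeg' := degree_eq_two_mul_card_neighborFinset_inter G hv'S (h₂.2.1.2.2.trans hcut.symm)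
  have hsum := card_neighborFinset_inter_add_le G hvv' hvS hv'S
  have hsnug := hv.2.1
  have hsnug' := hv'.2.1
  omega

/-- For every `k`-cut `S ⊆ V∖{r}` there is at most one vertex `v ∉ S` such that
`(S, S ∪ {v})` form snug shores for `v`. -/
theorem at_most_one_outgoing
    (k : ℕ) (hk : 1 ≤ k) (G : SimpleGraph V) [DecidableRel G.Adj]
    (hG : EdgeConnected G k) (r : V)
    (S : Finset V) (hS : IsCut G k S) (hrS : r ∉ S)
    (v v' : V) (hv : Snug G k r v) (hv' : Snug G k r v')
    (hvS : v ∉ S) (hv'S : v' ∉ S)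
    (h₁ : SnugShores G k r v S (insert v S))
    (h₂ : SnugShores G k r v' S (insert v' S)) :
    v = v' :=
  at_most_one_outgoing_general k G r S v v' hv hv' h₁ h₂
end

section
/- Let k ≥ 1, let G be a k-edge-connected finite simple graph on V, fix a root r ∈ V, and let S ⊆ V∖{r} be a k-cut. If v and v′ are snug vertices with v, v′ ∈ S such that (S∖{v}, S) are snug shores for v and (S∖{v′}, S) are snug shores for v′, then v = v′. In other words, for every k-cut S ⊆ V∖{r} there is at most one vertex v ∈ S such that (S∖{v}, S) form snug shores for v. -/
/-!
An edge `vy` at a vertex `v ∉ T` crosses exactly one of `T` and `T ∪ {v}`, while every other edge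
crosses both or neither. So if both are `k`-cuts, exactly half of the `deg v ≥ k + 1` edges at `v`
leave `T ∪ {v}`. Two distinct vertices `v, v'` of `S` with this property would together send more
than `k` edges out of `S`, and these edge sets are disjoint, since the only edge at both `v` and
`v'` lies inside `S`.
-/

open Finset

variable {V : Type*} [Fintype V] [DecidableEq V]

namespace Crosses

variable {α : Type*} {S : Finset α} {v : α} {e : Sym2 α}

theorem mk_iff {a b : α} : Crosses S s(a, b) ↔ (a ∈ S ↔ b ∉ S) := by
  constructor
  · rintro ⟨x, y, hxy, hx, hy⟩
    rcases Sym2.eq_iff.mp hxy with ⟨rfl, rfl⟩ | ⟨rfl, rfl⟩ <;> tauto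
  · intro h
    by_cases ha : a ∈ S
    · exact ⟨a, b, rfl, ha, h.mp ha⟩
    · exact ⟨b, a, Sym2.eq_swap, by tauto, ha⟩

theorem insert_iff_of_notMem [DecidableEq α] (he : v ∉ e) :
    Crosses (insert v S) e ↔ Crosses S e := by
  induction e using Sym2.ind with
  | _ a b =>
    simp only [Sym2.mem_iff, not_or] at he
    simp only [mk_iff, Finset.mem_insert, Ne.symm he.1, Ne.symm he.2, false_or]

theorem insert_iff_not_of_mem [DecidableEq α] (hvS : v ∉ S) (he : v ∈ e) (hd : ¬e.IsDiag) :
    Crosses (insert v S) e ↔ ¬Crosses S e := by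
  obtain ⟨w, rfl⟩ := Sym2.mem_iff_exists.mp he
  have hw : v ≠ w := fun h => hd (Sym2.mk_isDiag_iff.mpr h)
  simp only [mk_iff, Finset.mem_insert, Ne.symm hw, true_or, false_or, hvS]
  tauto

theorem not_mk_of_mem {a b : α} (ha : a ∈ S) (hb : b ∈ S) : ¬Crosses S s(a, b) := by
  simp [mk_iff, ha, hb]

end Crosses

section CutEdges

variable (G : SimpleGraph V) [DecidableRel G.Adj] {S : Finset V} {v v' : V}

theorem cutEdges_inter_incidenceFinset :
    cutEdges G S ∩ G.incidenceFinset v = (G.incidenceFinset v).filter (Crosses S) := by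
  ext e
  simp only [cutEdges, G.incidenceFinset_eq_filter, Finset.mem_inter, Finset.mem_filter]
  tauto

theorem cutEdges_insert_sdiff_incidenceFinset :
    cutEdges G (insert v S) \ G.incidenceFinset v = cutEdges G S \ G.incidenceFinset v := by
  ext e
  simp only [cutEdges, Finset.mem_sdiff, Finset.mem_filter, G.incidenceFinset_eq_filter,
    not_and]
  constructor
  · rintro ⟨⟨he, hc⟩, hv⟩
    exact ⟨⟨he, (Crosses.insert_iff_of_notMem (hv he)).mp hc⟩, hv⟩
  · rintro ⟨⟨he, hc⟩, hv⟩
    exact ⟨⟨he, (Crosses.insert_iff_of_notMem (hv he)).mpr hc⟩, hv⟩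

theorem card_cutEdges_insert_inter_incidenceFinset_add (hvS : v ∉ S) :
    #(cutEdges G (insert v S) ∩ G.incidenceFinset v) + #(cutEdges G S ∩ G.incidenceFinset v) =
      G.degree v := by
  have hswap : (G.incidenceFinset v).filter (Crosses (insert v S)) =
      (G.incidenceFinset v).filter (fun e => ¬Crosses S e) := by
    refine Finset.filter_congr fun e he => ?_
    rw [G.incidenceFinset_eq_filter, Finset.mem_filter] at he
    exact Crosses.insert_iff_not_of_mem hvS he.2
      (G.not_isDiag_of_mem_edgeSet (G.mem_edgeFinset.mp he.1))
  rw [cutEdges_inter_incidenceFinset, cutEdges_inter_incidenceFinset, hswap, add_comm,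
    Finset.card_filter_add_card_filter_not, G.card_incidenceFinset_eq_degree]

theorem two_mul_card_cutEdges_inter_incidenceFinset (hvS : v ∉ S)
    (hcard : #(cutEdges G (insert v S)) = #(cutEdges G S)) :
    2 * #(cutEdges G (insert v S) ∩ G.incidenceFinset v) = G.degree v := by
  have hsplit := card_cutEdges_insert_inter_incidenceFinset_add G hvS
  have hins := Finset.card_sdiff_add_card_inter (cutEdges G (insert v S)) (G.incidenceFinset v)
  have hS := Finset.card_sdiff_add_card_inter (cutEdges G S) (G.incidenceFinset v)
  rw [cutEdges_insert_sdiff_incidenceFinset] at hins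
  omega

theorem card_cutEdges_inter_incidenceFinset_add_le (hne : v ≠ v') (hv : v ∈ S) (hv' : v' ∈ S) :
    #(cutEdges G S ∩ G.incidenceFinset v) + #(cutEdges G S ∩ G.incidenceFinset v') ≤
      #(cutEdges G S) := by
  have hdisj : Disjoint (cutEdges G S ∩ G.incidenceFinset v)
      (cutEdges G S ∩ G.incidenceFinset v') := by
    rw [Finset.disjoint_left]
    intro e he he'
    rw [cutEdges_inter_incidenceFinset, Finset.mem_filter, G.incidenceFinset_eq_filter,
      Finset.mem_filter] at he he'
    obtain rfl := (Sym2.mem_and_mem_iff hne).mp ⟨he.1.2, he'.1.2⟩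
    exact Crosses.not_mk_of_mem hv hv' he.2
  rw [← Finset.card_union_of_disjoint hdisj]
  exact Finset.card_le_card (Finset.union_subset Finset.inter_subset_left Finset.inter_subset_left)

end CutEdges

theorem SnugShores.two_mul_card_cutEdges_inter_incidenceFinset {G : SimpleGraph V}
    [DecidableRel G.Adj] {k : ℕ} {r v : V} {S₁ S₂ : Finset V}
    (h : SnugShores G k r v S₁ S₂) :
    2 * #(cutEdges G S₂ ∩ G.incidenceFinset v) = G.degree v := by
  obtain ⟨⟨-, -, h₁⟩, ⟨-, -, h₂⟩, -, -, hvS₁, rfl⟩ := h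
  exact _root_.two_mul_card_cutEdges_inter_incidenceFinset G hvS₁ (h₂.trans h₁.symm)

theorem at_most_one_incoming_general
    (k : ℕ) (G : SimpleGraph V) [DecidableRel G.Adj]
    (r : V)
    (S : Finset V)
    (v v' : V) (hv : Snug G k r v) (hv' : Snug G k r v')
    (h₁ : SnugShores G k r v (S.erase v) S)
    (h₂ : SnugShores G k r v' (S.erase v') S) :
    v = v' := by
  by_contra hne
  have hvS : v ∈ S := h₁.2.2.2.2.2 ▸ Finset.mem_insert_self v _
  have hv'S : v' ∈ S := h₂.2.2.2.2.2 ▸ Finset.mem_insert_self v' _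
  have hsplit := card_cutEdges_inter_incidenceFinset_add_le G hne hvS hv'S
  have hhalf := h₁.two_mul_card_cutEdges_inter_incidenceFinset
  have hhalf' := h₂.two_mul_card_cutEdges_inter_incidenceFinset
  have hcut : #(cutEdges G S) = k := h₁.2.1.2.2
  have hdeg := hv.2.1
  have hdeg' := hv'.2.1
  omega

/-- For every `k`-cut `S ⊆ V∖{r}` there is at most one vertex `v ∈ S` such that
`(S ∖ {v}, S)` form snug shores for `v`. -/
theorem at_most_one_incoming
    (k : ℕ) (hk : 1 ≤ k) (G : SimpleGraph V) [DecidableRel G.Adj]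
    (hG : EdgeConnected G k) (r : V)
    (S : Finset V) (hS : IsCut G k S) (hrS : r ∉ S)
    (v v' : V) (hv : Snug G k r v) (hv' : Snug G k r v')
    (hvS : v ∈ S) (hv'S : v' ∈ S)
    (h₁ : SnugShores G k r v (S.erase v) S)
    (h₂ : SnugShores G k r v' (S.erase v') S) :
    v = v' :=
  at_most_one_incoming_general k G r S v v' hv hv' h₁ h₂
end
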